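/- arXiv:2310.00350 — 2 statements merged into one kernel-verified Lean document; each statement's English description precedes it below -/
import Mathlib

section
/- Fix an integer k ≥ 1 and t ≥ 0. A vertex v belongs to G^(k)_t if and only if the connected component of v in G*_t contains at least k vertices. Moreover, the connected components of G^(k)_t are exactly the connected components of G*_t containing at least k vertices: two vertices of G^(k)_t lie in the same connected component of G^(k)_t if and only if they lie in the same connected component of G*_t. -/
open ENNReal

variable {V : Type*}

/-- The sublevel graph `G*_t`: edges of `G` with weight at most `t`. -/
def sublevel (G : SimpleGraph V) (W : Sym2 V → NNReal) (t : ℝ≥0∞) : SimpleGraph V where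
  Adj u v := G.Adj u v ∧ (W s(u, v) : ℝ≥0∞) ≤ t
  symm := by
    constructor
    intro u v h
    exact ⟨h.1.symm, by rw [Sym2.eq_swap]; exact h.2⟩
  loopless := ⟨fun v h => G.loopless.irrefl v h.1⟩

/-- `N_t(v)`: the number of vertices in the connected component of `v` in `G*_t`. -/
noncomputable def clusterSize (G : SimpleGraph V) (W : Sym2 V → NNReal) (t : ℝ≥0∞) (v : V) : ℕ :=
  Set.ncard {u | (sublevel G W t).Reachable v u}

/-- `τ_k(v) = inf {t : N_t(v) ≥ k}`, the `k`-cluster filtration value of a vertex. -/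
noncomputable def tauV (G : SimpleGraph V) (W : Sym2 V → NNReal) (k : ℕ) (v : V) : ℝ≥0∞ :=
  sInf {t : ℝ≥0∞ | k ≤ clusterSize G W t v}

/-- `τ_k(e) = max (τ_k(u), τ_k(v), W(e))`, the `k`-cluster filtration value of an edge. -/
noncomputable def tauEdge (G : SimpleGraph V) (W : Sym2 V → NNReal) (k : ℕ) : Sym2 V → ℝ≥0∞ :=
  Sym2.lift ⟨fun u v => max (max (tauV G W k u) (tauV G W k v)) (W s(u, v)),
    by intro u v; simp only []; rw [max_comm (tauV G W k u), Sym2.eq_swap]⟩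

/-- The `k`-cluster sublevel graph `G^(k)_t`: its vertices are those `v` with
`τ_k(v) ≤ t` and its edges are those `e` with `τ_k(e) ≤ t`. -/
def kClusterGraph (G : SimpleGraph V) (W : Sym2 V → NNReal) (k : ℕ) (t : ℝ≥0∞) :
    SimpleGraph {v : V // tauV G W k v ≤ t} where
  Adj u v := G.Adj u.1 v.1 ∧ tauEdge G W k s(u.1, v.1) ≤ t
  symm := by
    constructor
    intro u v h
    exact ⟨h.1.symm, by rw [Sym2.eq_swap]; exact h.2⟩
  loopless := ⟨fun v h => G.loopless.irrefl v.1 h.1⟩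

/-!
The infimum defining `τ_k(v)` is attained at finite thresholds, because only finitely many
edge weights exist: hence `v ∈ G^(k)_t` iff `N_t(v) ≥ k`. Since `N_t` is constant on the
components of `G*_t`, the vertex set of `G^(k)_t` is a union of such components, and
`G^(k)_t` is exactly the subgraph of `G*_t` induced on it; reachability in an induced
subgraph on a union of components is reachability in the ambient graph.
-/

open Filter Topology

theorem SimpleGraph.induce_reachable_iff {G : SimpleGraph V} {s : Set V}
    (hs : ∀ ⦃a b⦄, G.Reachable a b → a ∈ s → b ∈ s) {u v : s} :
    (G.induce s).Reachable u v ↔ G.Reachable u v := by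
  classical
  refine ⟨fun h => h.map (Embedding.induce s).toHom, fun ⟨p⟩ => ?_⟩
  exact ⟨p.induce s fun w hw => hs (p.takeUntil w hw).reachable u.2⟩

section

variable (G : SimpleGraph V) (W : Sym2 V → NNReal)

lemma sublevel_mono {s s' : ℝ≥0∞} (h : s ≤ s') : sublevel G W s ≤ sublevel G W s' :=
  fun _ _ hadj => ⟨hadj.1, hadj.2.trans h⟩

lemma eventually_sublevel_eq [Finite V] (t : ℝ≥0∞) :
    ∀ᶠ s in 𝓝[>] t, sublevel G W s = sublevel G W t := by
  have hedge : ∀ e : Sym2 V, ∀ᶠ s in 𝓝[>] t, ((W e : ℝ≥0∞) ≤ s ↔ (W e : ℝ≥0∞) ≤ t) := by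
    intro e
    rcases le_or_gt (W e : ℝ≥0∞) t with hle | hlt
    · filter_upwards [self_mem_nhdsWithin] with s hs
      exact iff_of_true (hle.trans hs.le) hle
    · filter_upwards [nhdsWithin_le_nhds (eventually_lt_nhds hlt)] with s hs
      exact iff_of_false (not_le.2 hs) (not_le.2 hlt)
  filter_upwards [eventually_all.2 hedge] with s hs
  ext a b
  exact and_congr_right fun _ => hs s(a, b)

lemma clusterSize_mono [Finite V] {s s' : ℝ≥0∞} (h : s ≤ s') (v : V) :
    clusterSize G W s v ≤ clusterSize G W s' v :=
  Set.ncard_le_ncard (fun _ hu => hu.mono (sublevel_mono G W h))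

lemma clusterSize_eq_of_reachable {s : ℝ≥0∞} {a b : V} (h : (sublevel G W s).Reachable a b) :
    clusterSize G W s a = clusterSize G W s b := by
  unfold clusterSize
  congr 1
  ext u
  exact ⟨h.symm.trans, h.trans⟩

lemma tauV_le_iff [Finite V] (k : ℕ) {t : ℝ≥0∞} (ht : t ≠ ⊤) (v : V) :
    tauV G W k v ≤ t ↔ k ≤ clusterSize G W t v := by
  refine ⟨fun h => ?_, fun h => sInf_le h⟩
  obtain ⟨u, htu, hu⟩ := (mem_nhdsGT_iff_exists_Ioo_subset' (lt_top_iff_ne_top.2 ht)).1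
    (eventually_sublevel_eq G W t)
  obtain ⟨s, hs, hsu⟩ := sInf_lt_iff.1 (h.trans_lt htu)
  rcases le_or_gt s t with hst | hts
  · exact hs.trans (clusterSize_mono G W hst v)
  · have hsub : sublevel G W s = sublevel G W t := hu ⟨hts, hsu⟩
    simpa only [Set.mem_ofPred_eq, clusterSize, hsub] using hs

lemma tauEdge_le_iff (k : ℕ) (t : ℝ≥0∞) (u v : V) :
    tauEdge G W k s(u, v) ≤ t ↔
      tauV G W k u ≤ t ∧ tauV G W k v ≤ t ∧ (W s(u, v) : ℝ≥0∞) ≤ t := by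
  simp only [tauEdge, Sym2.lift_mk, max_le_iff, and_assoc]

lemma kClusterGraph_eq_induce (k : ℕ) (t : ℝ≥0∞) :
    kClusterGraph G W k t = (sublevel G W t).induce {v | tauV G W k v ≤ t} := by
  ext u v
  simp only [kClusterGraph, SimpleGraph.comap_adj, SimpleGraph.induce, sublevel,
    Function.Embedding.subtype_apply, tauEdge_le_iff, u.2, v.2, true_and]

end

theorem kClusterGraph_components_general [Fintype V] (G : SimpleGraph V) (W : Sym2 V → NNReal)
    (k : ℕ) (t : NNReal) :
    (∀ v : V, tauV G W k v ≤ (t : ℝ≥0∞) ↔ k ≤ clusterSize G W (t : ℝ≥0∞) v) ∧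
    (∀ (u v : V) (hu : tauV G W k u ≤ (t : ℝ≥0∞)) (hv : tauV G W k v ≤ (t : ℝ≥0∞)),
      (kClusterGraph G W k (t : ℝ≥0∞)).Reachable ⟨u, hu⟩ ⟨v, hv⟩ ↔
        (sublevel G W (t : ℝ≥0∞)).Reachable u v) := by
  have hvertex := tauV_le_iff G W k (ENNReal.coe_ne_top (r := t))
  refine ⟨hvertex, fun u v hu hv => ?_⟩
  rw [kClusterGraph_eq_induce]
  refine SimpleGraph.induce_reachable_iff fun a b hab ha => ?_
  rw [Set.mem_ofPred_eq, hvertex] at ha ⊢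
  rwa [← clusterSize_eq_of_reachable G W hab]

/-- For `k ≥ 1` and `t ≥ 0`: a vertex `v` belongs to `G^(k)_t` iff
its connected component in `G*_t` has at least `k` vertices; and two vertices of
`G^(k)_t` lie in the same connected component of `G^(k)_t` iff they lie in the same
connected component of `G*_t`. -/
theorem kClusterGraph_components [Fintype V] (G : SimpleGraph V) (W : Sym2 V → NNReal)
    (k : ℕ) (hk : 1 ≤ k) (t : NNReal) :
    (∀ v : V, tauV G W k v ≤ (t : ℝ≥0∞) ↔ k ≤ clusterSize G W (t : ℝ≥0∞) v) ∧
    (∀ (u v : V) (hu : tauV G W k u ≤ (t : ℝ≥0∞)) (hv : tauV G W k v ≤ (t : ℝ≥0∞)),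
      (kClusterGraph G W k (t : ℝ≥0∞)).Reachable ⟨u, hu⟩ ⟨v, hv⟩ ↔
        (sublevel G W (t : ℝ≥0∞)).Reachable u v) :=
  kClusterGraph_components_general G W k t
end

section
/- Fix an integer k ≥ 1 and let w : ℕ → ℝ with w(n) → ∞ and w(n) = o(log log n). If p = p(n) satisfies n·p(n) = (1/k)(log n + (k−1) log log n) + w(n), then P(N_k > 0) → 0 as n → ∞, where N_k is the number of connected components of G(n,p) with exactly k vertices. -/
open MeasureTheory Filter ENNReal

/-- The Erdős–Rényi measure `G(n,p)`: the product Bernoulli(`p`) measure, one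
independent coordinate for each of the `C(n,2)` possible edges (non-diagonal
unordered pairs) of a graph on `n` labeled vertices. -/
noncomputable def erMeasure (n : ℕ) (p : ℝ) :
    Measure ({e : Sym2 (Fin n) // ¬ e.IsDiag} → Bool) :=
  Measure.pi fun _ => (PMF.bernoulli (min (Real.toNNReal p) 1) (min_le_right _ _)).toMeasure

/-- The random graph associated to an outcome `ω`: the simple graph on `Fin n`
whose edges are those pairs with indicator `true`. -/
def erGraph (n : ℕ) (ω : {e : Sym2 (Fin n) // ¬ e.IsDiag} → Bool) : SimpleGraph (Fin n) :=
  SimpleGraph.fromEdgeSet {e : Sym2 (Fin n) | ∃ h : ¬ e.IsDiag, ω ⟨e, h⟩ = true}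

/-- `N_j(H)`: the number of connected components of `H` with exactly `j` vertices. -/
noncomputable def numCompsEq {V : Type*} (H : SimpleGraph V) (j : ℕ) : ℕ :=
  Set.ncard {c : H.ConnectedComponent | c.supp.ncard = j}

/-- A finite graph is `k`-cluster connected if it has exactly one connected component
with at least `k` vertices. -/
def kClusterConnected {V : Type*} (H : SimpleGraph V) (k : ℕ) : Prop :=
  ∃! c : H.ConnectedComponent, k ≤ c.supp.ncard

/-!
First moment method. If the vertex set `S` of a component has exactly `k` vertices, then `S`
spans a connected graph, hence at least `k - 1` present edges, while all `k (n - k)` pairs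
between `S` and its complement are absent. A union bound over `S` and over the `(k - 1)`-sets
of pairs inside `S` gives
`P(N_k > 0) ≤ C(n, k) C(C(k + 1, 2), k - 1) p^(k-1) (1 - p)^(k(n-k))`, which is at most
`C_k n (np)^(k-1) e^(-k np)`.
When `k np = log n + (k - 1) log log n + k w`, we have `n e^(-k np) = (log n)^(-(k-1)) e^(-k w)`
and `np ≤ log n + w ≤ (log n) e^w`, so the bound is at most `C_k e^(-w) → 0`.
-/

open Finset

def boolCylinder {ι : Type*} (T F : Finset ι) : Set (ι → Bool) :=
  {ω | (∀ e ∈ T, ω e = true) ∧ ∀ e ∈ F, ω e = false}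

theorem measure_pi_boolCylinder {ι : Type*} [Fintype ι] [DecidableEq ι] (ν : Measure Bool)
    [IsProbabilityMeasure ν] {T F : Finset ι} (hTF : Disjoint T F) :
    Measure.pi (fun _ : ι => ν) (boolCylinder T F) = ν {true} ^ #T * ν {false} ^ #F := by
  have hset : boolCylinder T F =
      Set.univ.pi fun e => {b | (e ∈ T → b = true) ∧ (e ∈ F → b = false)} := by
    ext ω
    simp only [boolCylinder, Set.mem_ofPred_eq, Set.mem_pi, Set.mem_univ, true_implies]
    exact ⟨fun h e => ⟨h.1 e, h.2 e⟩, fun h => ⟨fun e => (h e).1, fun e => (h e).2⟩⟩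
  have hcoord (e : ι) : ν {b | (e ∈ T → b = true) ∧ (e ∈ F → b = false)} =
      (if e ∈ T then ν {true} else 1) * (if e ∈ F then ν {false} else 1) := by
    have hTF' : e ∈ T → e ∉ F := fun h => disjoint_left.1 hTF h
    by_cases hT : e ∈ T <;> by_cases hF : e ∈ F <;> simp_all
    convert measure_univ (μ := ν)
    ext b
    cases b <;> simp
  rw [hset, Measure.pi_pi, prod_congr rfl fun e _ => hcoord e, prod_mul_distrib,
    prod_ite_mem, prod_ite_mem, univ_inter, univ_inter, prod_const, prod_const]

abbrev EdgeSlot (n : ℕ) : Type := {e : Sym2 (Fin n) // ¬ e.IsDiag}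

theorem erMeasure_boolCylinder {n : ℕ} {p : ℝ} (hp0 : 0 ≤ p) (hp1 : p ≤ 1)
    {T F : Finset (EdgeSlot n)} (hTF : Disjoint T F) :
    erMeasure n p (boolCylinder T F) = ENNReal.ofReal p ^ #T * ENNReal.ofReal (1 - p) ^ #F := by
  have hmin : min p.toNNReal 1 = p.toNNReal := min_eq_left (Real.toNNReal_le_one.2 hp1)
  rw [erMeasure, measure_pi_boolCylinder _ hTF,
    PMF.toMeasure_apply_singleton _ _ (measurableSet_singleton _),
    PMF.toMeasure_apply_singleton _ _ (measurableSet_singleton _)]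
  -- `PMF.bernoulli q _ b` is `cond b q (1 - q)` by definition
  change ((min p.toNNReal 1 : NNReal) : ℝ≥0∞) ^ #T *
    ((1 - min p.toNNReal 1 : NNReal) : ℝ≥0∞) ^ #F = _
  rw [hmin, ENNReal.coe_sub, ENNReal.coe_one, ENNReal.ofReal_sub _ hp0, ENNReal.ofReal_one]
  rfl

section Slots

variable {n : ℕ}

def insideSlots (S : Finset (Fin n)) : Finset (EdgeSlot n) := {e | e.1 ∈ S.sym2}

def boundarySlots (S : Finset (Fin n)) : Finset (EdgeSlot n) :=
  {e | e.1 ∉ S.sym2 ∧ e.1 ∉ Sᶜ.sym2}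

theorem mem_insideSlots {S : Finset (Fin n)} {e : EdgeSlot n} :
    e ∈ insideSlots S ↔ ∀ a ∈ e.1, a ∈ S := by
  simp [insideSlots, mem_sym2_iff]

theorem mem_boundarySlots {S : Finset (Fin n)} {e : EdgeSlot n} :
    e ∈ boundarySlots S ↔ (∃ a ∈ e.1, a ∈ S) ∧ ∃ b ∈ e.1, b ∉ S := by
  simp [boundarySlots, mem_sym2_iff, and_comm]

theorem disjoint_insideSlots_boundarySlots (S : Finset (Fin n)) :
    Disjoint (insideSlots S) (boundarySlots S) := by
  simp only [insideSlots, boundarySlots]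
  exact disjoint_filter.2 fun _ _ h h' => h'.1 h

theorem card_insideSlots_le (S : Finset (Fin n)) : #(insideSlots S) ≤ (#S + 1).choose 2 := by
  rw [← card_sym2]
  exact card_le_card_of_injOn Subtype.val (fun e he => (mem_filter.1 he).2)
    Subtype.val_injective.injOn

theorem card_mul_le_card_boundarySlots (S : Finset (Fin n)) :
    #S * (n - #S) ≤ #(boundarySlots S) := by
  have hne {a b : Fin n} (h : (a, b) ∈ S ×ˢ Sᶜ) : ¬ (s(a, b)).IsDiag := by
    simp only [mem_product, mem_compl] at h
    exact fun hd => h.2 (Sym2.mk_isDiag_iff.1 hd ▸ h.1)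
  let f : S ×ˢ Sᶜ → boundarySlots S := fun ab =>
    ⟨⟨s(ab.1.1, ab.1.2), hne ab.2⟩, by
      obtain ⟨ha, hb⟩ := mem_product.1 ab.2
      exact mem_boundarySlots.2 ⟨⟨_, Sym2.mem_mk_left _ _, ha⟩,
        ⟨_, Sym2.mem_mk_right _ _, mem_compl.1 hb⟩⟩⟩
  have hf : Function.Injective f := by
    rintro ⟨⟨a, b⟩, hab⟩ ⟨⟨a', b'⟩, hab'⟩ h
    simp only [f, Subtype.mk.injEq, Sym2.eq_iff] at h
    simp only [mem_product, mem_compl] at hab hab'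
    rcases h with ⟨rfl, rfl⟩ | ⟨rfl, rfl⟩
    · rfl
    · exact absurd hab.1 hab'.2
  simpa [card_product, card_compl] using card_le_card_of_injective hf

theorem mem_edgeSet_erGraph {ω : EdgeSlot n → Bool} (e : EdgeSlot n) :
    e.1 ∈ (erGraph n ω).edgeSet ↔ ω e = true := by
  simp [erGraph, SimpleGraph.edgeSet_fromEdgeSet, e.2]

end Slots

section Components

variable {n : ℕ} {ω : EdgeSlot n → Bool} {c : (erGraph n ω).ConnectedComponent}
  {S : Finset (Fin n)}

theorem eq_false_of_mem_boundarySlots (hS : (S : Set (Fin n)) = c.supp) {e : EdgeSlot n}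
    (he : e ∈ boundarySlots S) : ω e = false := by
  obtain ⟨⟨a, hae, ha⟩, ⟨b, hbe, hb⟩⟩ := mem_boundarySlots.1 he
  have hab : a ≠ b := fun h => hb (h ▸ ha)
  rw [← Bool.not_eq_true, ← mem_edgeSet_erGraph, (Sym2.mem_and_mem_iff hab).1 ⟨hae, hbe⟩,
    SimpleGraph.mem_edgeSet]
  intro hadj
  have hb' : b ∈ c.supp := c.mem_supp_of_adj_mem_supp (hS ▸ ha) hadj
  rw [← hS] at hb'
  exact hb hb'

theorem card_le_card_filter_insideSlots_add_one (hS : (S : Set (Fin n)) = c.supp) :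
    #S ≤ #{e ∈ insideSlots S | ω e = true} + 1 := by
  let f : c.toSimpleGraph.edgeSet → {e ∈ insideSlots S | ω e = true} := fun e =>
    have he := c.toSimpleGraph_hom.map_mem_edgeSet e.2
    ⟨⟨e.1.map Subtype.val, (erGraph n ω).not_isDiag_of_mem_edgeSet he⟩, by
      refine mem_filter.2 ⟨mem_insideSlots.2 fun a ha => ?_, (mem_edgeSet_erGraph _).1 he⟩
      obtain ⟨v, -, rfl⟩ := Sym2.mem_map.1 ha
      exact mem_coe.1 (hS ▸ v.2)⟩
  have hf : Function.Injective f := fun e e' h =>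
    Subtype.ext (Sym2.map.injective Subtype.val_injective (congrArg (·.1.1) h))
  have htree := c.connected_toSimpleGraph.card_vert_le_card_edgeSet_add_one
  have hedges := Nat.card_le_card_of_injective f hf
  rw [Nat.card_eq_finsetCard] at hedges
  have hcard : Nat.card c = #S := by
    rw [← Nat.card_eq_finsetCard]
    exact Nat.card_congr (Equiv.setCongr hS.symm)
  omega

end Components

theorem setOf_numCompsEq_pos_subset (n k : ℕ) :
    {ω : EdgeSlot n → Bool | 0 < numCompsEq (erGraph n ω) k} ⊆
      ⋃ S ∈ powersetCard k (univ : Finset (Fin n)),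
        ⋃ T ∈ powersetCard (k - 1) (insideSlots S), boolCylinder T (boundarySlots S) := by
  intro ω hω
  obtain ⟨c, hc⟩ := Set.nonempty_of_ncard_ne_zero (Nat.pos_iff_ne_zero.1 hω)
  set S := c.supp.toFinite.toFinset
  have hS : (S : Set (Fin n)) = c.supp := Set.Finite.coe_toFinset _
  have hSk : #S = k := by rw [← hc.out, Set.ncard_eq_toFinset_card _ c.supp.toFinite]
  obtain ⟨T, hT, hTk⟩ := exists_subset_card_eq (s := {e ∈ insideSlots S | ω e = true})
    (n := k - 1) (by have := card_le_card_filter_insideSlots_add_one hS; omega)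
  simp only [Set.mem_iUnion, mem_powersetCard]
  exact ⟨S, ⟨subset_univ _, hSk⟩, T, ⟨hT.trans (filter_subset _ _), hTk⟩,
    fun e he => (mem_filter.1 (hT he)).2, fun e he => eq_false_of_mem_boundarySlots hS he⟩

theorem erMeasure_numCompsEq_pos_le {n k : ℕ} {p : ℝ} (hp0 : 0 ≤ p) (hp1 : p ≤ 1) :
    erMeasure n p {ω | 0 < numCompsEq (erGraph n ω) k} ≤
      n.choose k * ((k + 1).choose 2).choose (k - 1) *
        (ENNReal.ofReal p ^ (k - 1) * ENNReal.ofReal (1 - p) ^ (k * (n - k))) := by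
  set B := ENNReal.ofReal p ^ (k - 1) * ENNReal.ofReal (1 - p) ^ (k * (n - k))
  have hcyl {S : Finset (Fin n)} (hS : #S = k) {T : Finset (EdgeSlot n)}
      (hT : T ∈ powersetCard (k - 1) (insideSlots S)) :
      erMeasure n p (boolCylinder T (boundarySlots S)) ≤ B := by
    obtain ⟨hT, hTk⟩ := mem_powersetCard.1 hT
    rw [erMeasure_boolCylinder hp0 hp1 ((disjoint_insideSlots_boundarySlots S).mono_left hT),
      hTk]
    exact mul_le_mul_right (pow_le_pow_right_of_le_one' (ENNReal.ofReal_le_one.2 (by linarith))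
      (hS ▸ card_mul_le_card_boundarySlots S)) _
  calc erMeasure n p {ω | 0 < numCompsEq (erGraph n ω) k}
      ≤ ∑ S ∈ powersetCard k univ, ∑ T ∈ powersetCard (k - 1) (insideSlots S),
          erMeasure n p (boolCylinder T (boundarySlots S)) :=
        (measure_mono (setOf_numCompsEq_pos_subset n k)).trans <|
          (measure_biUnion_finset_le _ _).trans <|
            sum_le_sum fun S _ => measure_biUnion_finset_le _ _
    _ ≤ ∑ S ∈ powersetCard k univ, ((k + 1).choose 2).choose (k - 1) * B := by
        gcongr with S hS
        rw [mem_powersetCard_univ] at hS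
        refine (sum_le_sum fun T hT => hcyl hS hT).trans ?_
        rw [sum_const, card_powersetCard, nsmul_eq_mul]
        gcongr
        exact hS ▸ card_insideSlots_le S
    _ = _ := by
        rw [sum_const, card_powersetCard, card_univ, Fintype.card_fin, nsmul_eq_mul, mul_assoc]

theorem exp_mul_pow_mul_exp_neg_le {m : ℕ} {L w x : ℝ} (hL : 1 ≤ L) (hw : 0 ≤ w)
    (hx : (m + 1) * x = L + m * Real.log L + (m + 1) * w) :
    Real.exp L * x ^ m * Real.exp (-((m + 1) * x)) ≤ Real.exp (-w) := by
  have hlogL : 0 ≤ Real.log L := Real.log_nonneg hL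
  have hlogL' : m * Real.log L ≤ m * L := by gcongr; exact Real.log_le_self (by linarith)
  have hx0 : 0 ≤ x := by nlinarith
  have hxL : x ≤ Real.exp (Real.log L + w) := by
    have hxLw : x ≤ L + w :=
      le_of_mul_le_mul_left (by linarith) (by positivity : (0 : ℝ) < m + 1)
    rw [Real.exp_add, Real.exp_log (by linarith)]
    nlinarith [Real.add_one_le_exp w]
  calc Real.exp L * x ^ m * Real.exp (-((m + 1) * x))
      ≤ Real.exp L * Real.exp (m * (Real.log L + w)) * Real.exp (-((m + 1) * x)) := by
        rw [Real.exp_nat_mul]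
        gcongr
    _ = Real.exp (-w) := by
        rw [← Real.exp_add, ← Real.exp_add]
        congr 1
        linarith

theorem choose_mul_pow_mul_one_sub_pow_le {m n : ℕ} {p w : ℝ} (hmn : m + 1 ≤ n)
    (hp0 : 0 ≤ p) (hp1 : p ≤ 1) (hn : 1 ≤ Real.log n) (hw : 0 ≤ w)
    (hnp : (m + 1) * (n * p) = Real.log n + m * Real.log (Real.log n) + (m + 1) * w) :
    n.choose (m + 1) * p ^ m * (1 - p) ^ ((m + 1) * (n - (m + 1))) ≤
      Real.exp ((m + 1) ^ 2) * Real.exp (-w) := by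
  have hn0 : (0 : ℝ) < n := by exact_mod_cast (by omega : 0 < n)
  have hchoose : (n.choose (m + 1) : ℝ) ≤ n ^ (m + 1) := by exact_mod_cast Nat.choose_le_pow n _
  have hsparse : (1 - p) ^ ((m + 1) * (n - (m + 1))) ≤
      Real.exp ((m + 1) ^ 2) * Real.exp (-((m + 1) * (n * p))) := by
    calc (1 - p) ^ ((m + 1) * (n - (m + 1)))
        ≤ Real.exp (-p) ^ ((m + 1) * (n - (m + 1))) := by
          gcongr
          linarith [Real.add_one_le_exp (-p)]
      _ = Real.exp (((m + 1) * (n - (m + 1)) : ℕ) * -p) := (Real.exp_nat_mul _ _).symm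
      _ ≤ Real.exp ((m + 1) ^ 2) * Real.exp (-((m + 1) * (n * p))) := by
          rw [← Real.exp_add]
          gcongr
          push_cast [Nat.cast_sub hmn]
          nlinarith
  calc n.choose (m + 1) * p ^ m * (1 - p) ^ ((m + 1) * (n - (m + 1)))
      ≤ n ^ (m + 1) * p ^ m * (Real.exp ((m + 1) ^ 2) * Real.exp (-((m + 1) * (n * p)))) := by
        gcongr
    _ = Real.exp ((m + 1) ^ 2) * (Real.exp (Real.log n) * (n * p) ^ m *
          Real.exp (-((m + 1) * (n * p)))) := by
        rw [Real.exp_log hn0]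
        ring
    _ ≤ Real.exp ((m + 1) ^ 2) * Real.exp (-w) := by
        gcongr
        exact exp_mul_pow_mul_exp_neg_le hn hw hnp

theorem erMeasure_numCompsEq_pos_le_exp {m n : ℕ} {p w : ℝ} (hmn : m + 1 ≤ n) (hp0 : 0 ≤ p)
    (hp1 : p ≤ 1) (hn : 1 ≤ Real.log n) (hw : 0 ≤ w)
    (hnp : (m + 1) * (n * p) = Real.log n + m * Real.log (Real.log n) + (m + 1) * w) :
    erMeasure n p {ω | 0 < numCompsEq (erGraph n ω) (m + 1)} ≤
      ENNReal.ofReal (((m + 2).choose 2).choose m * Real.exp ((m + 1) ^ 2) * Real.exp (-w)) := by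
  calc erMeasure n p {ω | 0 < numCompsEq (erGraph n ω) (m + 1)}
      ≤ n.choose (m + 1) * ((m + 2).choose 2).choose m *
          (ENNReal.ofReal p ^ m * ENNReal.ofReal (1 - p) ^ ((m + 1) * (n - (m + 1)))) :=
        erMeasure_numCompsEq_pos_le hp0 hp1
    _ = ENNReal.ofReal (((m + 2).choose 2).choose m *
          (n.choose (m + 1) * p ^ m * (1 - p) ^ ((m + 1) * (n - (m + 1))))) := by
        rw [ENNReal.ofReal_mul (by positivity),
          ENNReal.ofReal_mul (mul_nonneg (by positivity) (pow_nonneg hp0 _)),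
          ENNReal.ofReal_mul (by positivity), ENNReal.ofReal_pow hp0,
          ENNReal.ofReal_pow (sub_nonneg.2 hp1), ENNReal.ofReal_natCast, ENNReal.ofReal_natCast]
        ring
    _ ≤ _ := by
        refine ENNReal.ofReal_le_ofReal ?_
        rw [mul_assoc _ (Real.exp _)]
        exact mul_le_mul_of_nonneg_left
          (choose_mul_pow_mul_one_sub_pow_le hmn hp0 hp1 hn hw hnp) (by positivity)

theorem prob_comps_size_k_tendsto_zero_general (k : ℕ) (hk : 1 ≤ k) (p w : ℕ → ℝ)
    (hp0 : ∀ n, 0 ≤ p n) (hp1 : ∀ n, p n ≤ 1)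
    (hw : Tendsto w atTop atTop)
    (hΛ : ∀ᶠ n : ℕ in atTop, (n : ℝ) * p n =
      (1 / (k : ℝ)) * (Real.log n + ((k : ℝ) - 1) * Real.log (Real.log n)) + w n) :
    Tendsto (fun n => erMeasure n (p n) {ω | 0 < numCompsEq (erGraph n ω) k})
      atTop (nhds 0) := by
  obtain ⟨m, rfl⟩ : ∃ m, k = m + 1 := ⟨k - 1, by omega⟩
  set C : ℝ := ((m + 2).choose 2).choose m * Real.exp ((m + 1) ^ 2)
  have hlog : ∀ᶠ n : ℕ in atTop, 1 ≤ Real.log n :=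
    (Real.tendsto_log_atTop.comp tendsto_natCast_atTop_atTop).eventually_ge_atTop 1
  have hbound : ∀ᶠ n in atTop,
      erMeasure n (p n) {ω | 0 < numCompsEq (erGraph n ω) (m + 1)} ≤
        ENNReal.ofReal (C * Real.exp (-w n)) := by
    filter_upwards [hΛ, hlog, hw.eventually_ge_atTop 0, eventually_ge_atTop (m + 1)]
      with n hnp hn hwn hmn
    refine erMeasure_numCompsEq_pos_le_exp hmn (hp0 n) (hp1 n) hn hwn ?_
    rw [hnp]
    push_cast
    field_simp
    ring
  have hlim : Tendsto (fun n => ENNReal.ofReal (C * Real.exp (-w n))) atTop (nhds 0) := by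
    simpa using ENNReal.tendsto_ofReal
      ((Real.tendsto_exp_atBot.comp (tendsto_neg_atTop_atBot.comp hw)).const_mul C)
  exact tendsto_of_tendsto_of_tendsto_of_le_of_le' tendsto_const_nhds hlim
    (Eventually.of_forall fun _ => zero_le) hbound

/-- For `k ≥ 1` and `w(n) → ∞`, `w(n) = o(log log n)`: if
`n·p(n) = (1/k)(log n + (k−1) log log n) + w(n)` then `P(N_k > 0) → 0`, where `N_k`
is the number of connected components of `G(n,p)` with exactly `k` vertices. -/
theorem prob_comps_size_k_tendsto_zero (k : ℕ) (hk : 1 ≤ k) (p w : ℕ → ℝ)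
    (hp0 : ∀ n, 0 ≤ p n) (hp1 : ∀ n, p n ≤ 1)
    (hw : Tendsto w atTop atTop)
    (hwo : w =o[atTop] fun n : ℕ => Real.log (Real.log n))
    (hΛ : ∀ᶠ n : ℕ in atTop, (n : ℝ) * p n =
      (1 / (k : ℝ)) * (Real.log n + ((k : ℝ) - 1) * Real.log (Real.log n)) + w n) :
    Tendsto (fun n => erMeasure n (p n) {ω | 0 < numCompsEq (erGraph n ω) k})
      atTop (nhds 0) :=
  prob_comps_size_k_tendsto_zero_general k hk p w hp0 hp1 hw hΛ
end
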